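/- Let A, B : [0,1]² → ℝⁿ be bilinear interpolations, ε ≥ 0, and define the freespace cell C = {(x,y,t) ∈ [0,1]³ : ‖A(x,t) − B(y,t)‖ ≤ ε}. Then the intersection of C with any line parallel to the t-axis (i.e. the set {t ∈ [0,1] : (x,y,t) ∈ C} for fixed x,y) is convex. -/
import Mathlib

/-- the intersection of a freespace cell with a line parallel to the
t-axis is convex. -/
theorem freespace_cell_t_line_convex
    {E : Type*} [NormedAddCommGroup E] [NormedSpace ℝ E]
    (a₁ b₁ c₁ d₁ a₂ b₂ c₂ d₂ : E)
    (A B : ℝ → ℝ → E)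
    (hA : ∀ x t : ℝ, A x t =
      ((1 - x) * (1 - t)) • a₁ + (x * (1 - t)) • b₁ + ((1 - x) * t) • c₁ + (x * t) • d₁)
    (hB : ∀ y t : ℝ, B y t =
      ((1 - y) * (1 - t)) • a₂ + (y * (1 - t)) • b₂ + ((1 - y) * t) • c₂ + (y * t) • d₂)
    (ε : ℝ) (hε : 0 ≤ ε)
    (x y : ℝ) (hx : x ∈ Set.Icc (0:ℝ) 1) (hy : y ∈ Set.Icc (0:ℝ) 1) :
    Convex ℝ {t : ℝ | t ∈ Set.Icc (0:ℝ) 1 ∧ ‖A x t - B y t‖ ≤ ε} := by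
  intro t₁ ht₁ t₂ ht₂ u v hu hv huv
  obtain ⟨ht₁I, ht₁n⟩ := ht₁
  obtain ⟨ht₂I, ht₂n⟩ := ht₂
  constructor
  · exact (convex_Icc (0:ℝ) 1) ht₁I ht₂I hu hv huv
  · have hv' : v = 1 - u := by linarith
    subst hv'
    have key : A x (u • t₁ + (1-u) • t₂) - B y (u • t₁ + (1-u) • t₂)
        = u • (A x t₁ - B y t₁) + (1-u) • (A x t₂ - B y t₂) := by
      simp only [hA, hB, smul_eq_mul]
      module
    calc ‖A x (u • t₁ + (1-u) • t₂) - B y (u • t₁ + (1-u) • t₂)‖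
        = ‖u • (A x t₁ - B y t₁) + (1-u) • (A x t₂ - B y t₂)‖ := by rw [key]
      _ ≤ u * ‖A x t₁ - B y t₁‖ + (1-u) * ‖A x t₂ - B y t₂‖ := by
          refine (norm_add_le _ _).trans ?_
          rw [norm_smul, norm_smul, Real.norm_eq_abs, Real.norm_eq_abs,
            abs_of_nonneg hu, abs_of_nonneg hv]
      _ ≤ u * ε + (1-u) * ε := by
          have h1 : u * ‖A x t₁ - B y t₁‖ ≤ u * ε :=
            mul_le_mul_of_nonneg_left ht₁n hu
          have h2 : (1-u) * ‖A x t₂ - B y t₂‖ ≤ (1-u) * ε :=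
            mul_le_mul_of_nonneg_left ht₂n hv
          linarith
      _ = ε := by ring
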